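/- arXiv:1310.6283 — 6 statements merged into one kernel-verified Lean document; each statement's English description precedes it below -/
import Mathlib

section
/- Let G be a group generated by a finite set X, let A = X ⊕ X be the alphabet consisting of two disjoint copies of X, and let π : A* → G be the monoid homomorphism sending the first copy of each x ∈ X to x and the second copy to x⁻¹. Then the word problem W_A(G) = { w ∈ A* : π(w) = 1 } is a regular language if and only if G is finite. -/
/-!
By the Myhill–Nerode theorem, `W_A(G)` is regular iff it has finitely many left quotients.
The left quotient of `W_A(G)` by a word `u` is the fibre of `π` over `π(u)⁻¹`; since `X`
generates `G`, the map `π` is onto, so these fibres are nonempty, pairwise distinct, and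
indexed by all of `G`.
-/

/-- The canonical monoid homomorphism `A* → G` for the alphabet `A = X ⊕ X`,
sending the first copy of `x` to `f x` and the second copy to `(f x)⁻¹`. -/
def wordProblemHom {X G : Type} [Group G] (f : X → G) : FreeMonoid (X ⊕ X) →* G :=
  FreeMonoid.lift (Sum.elim f fun x => (f x)⁻¹)

/-- The word problem of `G` with respect to the alphabet `A = X ⊕ X`. -/
def wordProblem {X G : Type} [Group G] (f : X → G) : Language (X ⊕ X) :=
  { w : List (X ⊕ X) | wordProblemHom f (FreeMonoid.ofList w) = 1 }

namespace WordProblem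

variable {X G : Type} [Group G] {f : X → G}

def fiber (f : X → G) (g : G) : Language (X ⊕ X) :=
  { w : List (X ⊕ X) | wordProblemHom f (FreeMonoid.ofList w) = g }

theorem wordProblemHom_surjective (hgen : Subgroup.closure (Set.range f) = ⊤) :
    Function.Surjective (wordProblemHom f) := by
  rw [← MonoidHom.mrange_eq_top, wordProblemHom, FreeMonoid.mrange_lift, Set.Sum.elim_range,
    ← Set.inv_range, ← Subgroup.closure_toSubmonoid, hgen, Subgroup.top_toSubmonoid]

theorem fiber_injective (hf : Function.Surjective (wordProblemHom f)) :
    Function.Injective (fiber f) := by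
  intro g h hgh
  obtain ⟨w, rfl⟩ := hf g
  exact (Set.ext_iff.mp hgh (FreeMonoid.toList w)).mp rfl

theorem leftQuotient_wordProblem (u : List (X ⊕ X)) :
    (wordProblem f).leftQuotient u = fiber f (wordProblemHom f (FreeMonoid.ofList u))⁻¹ := by
  ext w
  change wordProblemHom f (.ofList (u ++ w)) = 1 ↔ wordProblemHom f (.ofList w) = _
  rw [FreeMonoid.ofList_append, map_mul, mul_eq_one_iff_inv_eq, eq_comm]

theorem range_leftQuotient_wordProblem (hf : Function.Surjective (wordProblemHom f)) :
    Set.range (wordProblem f).leftQuotient = Set.range (fiber f) := by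
  have hsurj : Function.Surjective fun u : List (X ⊕ X) ↦
      (wordProblemHom f (FreeMonoid.ofList u))⁻¹ :=
    inv_surjective.comp (hf.comp FreeMonoid.ofList.surjective)
  rw [funext (leftQuotient_wordProblem (f := f)), ← hsurj.range_comp (fiber f)]
  rfl

end WordProblem

theorem stmt_0_general {X G : Type} [Group G] (f : X → G)
    (hgen : Subgroup.closure (Set.range f) = ⊤) :
    (wordProblem f).IsRegular ↔ Finite G := by
  have hf := WordProblem.wordProblemHom_surjective hgen
  rw [Language.isRegular_iff_finite_range_leftQuotient,
    WordProblem.range_leftQuotient_wordProblem hf, Set.finite_range_iff (WordProblem.fiber_injective hf)]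

theorem stmt_0 {X G : Type} [Group G] [Finite X] (f : X → G)
    (hgen : Subgroup.closure (Set.range f) = ⊤) :
    (wordProblem f).IsRegular ↔ Finite G :=
  stmt_0_general f hgen
end

section
/- Let G be a group, and let X₁ and X₂ be two finite generating sets of G, with alphabets A₁ = X₁ ⊕ X₁ and A₂ = X₂ ⊕ X₂ and canonical monoid homomorphisms π₁ : A₁* → G and π₂ : A₂* → G. If the word problem W_{A₁}(G) = { w ∈ A₁* : π₁(w) = 1 } is a regular language, then the word problem W_{A₂}(G) = { w ∈ A₂* : π₂(w) = 1 } is also a regular language. -/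
namespace DFA

variable {α β σ : Type*}

def comapFlatMap (φ : β → List α) (M : DFA α σ) : DFA β σ where
  step s b := M.evalFrom s (φ b)
  start := M.start
  accept := M.accept

theorem evalFrom_comapFlatMap (φ : β → List α) (M : DFA α σ) (s : σ) (w : List β) :
    (M.comapFlatMap φ).evalFrom s w = M.evalFrom s (w.flatMap φ) := by
  induction w generalizing s with
  | nil => rfl
  | cons b w ih => rw [List.flatMap_cons, evalFrom_of_append, evalFrom_cons, ← ih]; rfl

theorem accepts_comapFlatMap (φ : β → List α) (M : DFA α σ) :
    (M.comapFlatMap φ).accepts = (fun w => w.flatMap φ) ⁻¹' M.accepts := by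
  ext w
  exact Iff.of_eq (congrArg (· ∈ M.accept) (evalFrom_comapFlatMap φ M M.start w))

end DFA

theorem Language.IsRegular.preimage_flatMap {α β : Type*} {L : Language α}
    (hL : L.IsRegular) (φ : β → List α) :
    Language.IsRegular ((fun w => w.flatMap φ) ⁻¹' L : Set (List β)) := by
  obtain ⟨σ, _, M, rfl⟩ := hL
  exact ⟨σ, inferInstance, M.comapFlatMap φ, M.accepts_comapFlatMap φ⟩

theorem FreeMonoid.lift_ofList_flatMap {α β M : Type*} [Monoid M] (π : FreeMonoid α →* M)
    (φ : β → List α) (w : List β) :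
    π (ofList (w.flatMap φ)) = lift (fun b => π (ofList (φ b))) (ofList w) := by
  induction w with
  | nil => simp
  | cons b w ih => simp [List.flatMap_cons, ih]

theorem wordProblemHom_surjective {X G : Type} [Group G] {f : X → G}
    (hf : Subgroup.closure (Set.range f) = ⊤) : Function.Surjective (wordProblemHom f) := by
  rw [← MonoidHom.mrange_eq_top, wordProblemHom, FreeMonoid.mrange_lift, Set.Sum.elim_range,
    ← Set.inv_range, ← Subgroup.closure_toSubmonoid, hf, Subgroup.top_toSubmonoid]

theorem exists_wordProblem_eq_preimage_flatMap {X₁ X₂ G : Type} [Group G] {f₁ : X₁ → G}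
    (hf₁ : Subgroup.closure (Set.range f₁) = ⊤) (f₂ : X₂ → G) :
    ∃ φ : X₂ ⊕ X₂ → List (X₁ ⊕ X₁),
      wordProblem f₂ = (fun w => w.flatMap φ) ⁻¹' wordProblem f₁ := by
  choose ψ hψ using fun a => wordProblemHom_surjective hf₁ (wordProblemHom f₂ (.of a))
  refine ⟨fun a => (ψ a).toList, ?_⟩
  ext w
  have hsubst : wordProblemHom f₁ (.ofList (w.flatMap fun a => (ψ a).toList)) =
      wordProblemHom f₂ (.ofList w) := by
    rw [FreeMonoid.lift_ofList_flatMap]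
    congr 1
    exact FreeMonoid.hom_eq fun a => by simp [hψ]
  exact Iff.of_eq (congrArg (· = 1) hsubst.symm)

theorem stmt_1_general {X₁ X₂ G : Type} [Group G]
    (f₁ : X₁ → G) (f₂ : X₂ → G)
    (h₁ : Subgroup.closure (Set.range f₁) = ⊤)
    (hreg : (wordProblem f₁).IsRegular) :
    (wordProblem f₂).IsRegular := by
  obtain ⟨φ, hφ⟩ := exists_wordProblem_eq_preimage_flatMap h₁ f₂
  rw [hφ]
  exact hreg.preimage_flatMap φ

theorem stmt_1 {X₁ X₂ G : Type} [Group G] [Finite X₁] [Finite X₂]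
    (f₁ : X₁ → G) (f₂ : X₂ → G)
    (h₁ : Subgroup.closure (Set.range f₁) = ⊤)
    (h₂ : Subgroup.closure (Set.range f₂) = ⊤)
    (hreg : (wordProblem f₁).IsRegular) :
    (wordProblem f₂).IsRegular :=
  stmt_1_general f₁ f₂ h₁ hreg
end

section
/- Let G₁ and G₂ be groups. The kernel of the canonical homomorphism from the free product G₁ ∗ G₂ to the direct product G₁ × G₂ (induced by the inclusions of G₁ and G₂ into G₁ × G₂) is a free group, and it is generated by the set of commutators { g₁ g₂ g₁⁻¹ g₂⁻¹ : g₁ ∈ G₁, g₂ ∈ G₂ } (viewed as elements of G₁ ∗ G₂). -/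
/-!
Let `F` be the free group on the pairs `(a, b) ∈ G₁ × G₂` with `a ≠ 1` and `b ≠ 1`, and let
`φ : F → G₁ ∗ G₂` send `(a, b)` to `⁅a, b⁆`. Conjugating a commutator `⁅u, v⁆` by an element of
`G₁` or of `G₂` gives a product of two such commutators, and these formulas define endomorphisms
of `F` lifting the two conjugations. With them, `G₁ ∗ G₂` acts on triples `(x, a, b)`, read as
`φ x * a * b`, lifting left multiplication. Acting on `(1, 1, 1)` writes every `w` as
`φ x * a * b` with `(a, b)` the image of `w` in `G₁ × G₂`, so the kernel is the range of `φ`;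
and `φ x` sends `(1, 1, 1)` to `(x, 1, 1)`, so `φ` is injective.
-/

open Monoid Coprod
open scoped commutatorElement

namespace Monoid.Coprod.KerToProd

variable {G₁ G₂ : Type*} [Group G₁] [Group G₂]

variable (G₁ G₂) in
abbrev NontrivialPair := {p : G₁ × G₂ // p.1 ≠ 1 ∧ p.2 ≠ 1}

variable (G₁ G₂) in
abbrev FreeComm := FreeGroup (NontrivialPair G₁ G₂)

-- Commutators with a trivial entry are `1` in the coproduct, so they are not free generators.
open Classical in
noncomputable def formalComm (a : G₁) (b : G₂) : FreeComm G₁ G₂ :=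
  if h : a ≠ 1 ∧ b ≠ 1 then FreeGroup.of ⟨(a, b), h⟩ else 1

@[simp] lemma formalComm_one_left (b : G₂) : formalComm (1 : G₁) b = 1 := by simp [formalComm]

@[simp] lemma formalComm_one_right (a : G₁) : formalComm a (1 : G₂) = 1 := by simp [formalComm]

lemma formalComm_eq_of (s : NontrivialPair G₁ G₂) : formalComm s.1.1 s.1.2 = FreeGroup.of s := by
  simp [formalComm, s.2]

lemma lift_formalComm {H : Type*} [Group H] {f : G₁ → G₂ → H}
    (hf₁ : ∀ b, f 1 b = 1) (hf₂ : ∀ a, f a 1 = 1) (a : G₁) (b : G₂) :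
    FreeGroup.lift (fun s : NontrivialPair G₁ G₂ => f s.1.1 s.1.2) (formalComm a b) = f a b := by
  by_cases h : a ≠ 1 ∧ b ≠ 1
  · simp [formalComm, h]
  · obtain rfl | rfl : a = 1 ∨ b = 1 := by tauto
    all_goals simp [hf₁, hf₂]

noncomputable def toCoprod : FreeComm G₁ G₂ →* Coprod G₁ G₂ :=
  FreeGroup.lift fun s : NontrivialPair G₁ G₂ => ⁅(inl s.1.1 : Coprod G₁ G₂), inr s.1.2⁆

@[simp] lemma toCoprod_formalComm (a : G₁) (b : G₂) :
    toCoprod (formalComm a b) = ⁅(inl a : Coprod G₁ G₂), inr b⁆ :=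
  lift_formalComm (f := fun a b => ⁅(inl a : Coprod G₁ G₂), inr b⁆) (by simp) (by simp) a b

lemma toProd_comp_toCoprod : (toProd.comp toCoprod : FreeComm G₁ G₂ →* G₁ × G₂) = 1 := by
  refine FreeGroup.ext_hom _ _ fun s => ?_
  simp [toCoprod, commutatorElement_def, Prod.ext_iff]

-- `inl h * ⁅inl u, inr v⁆ * (inl h)⁻¹ = ⁅inl (h * u), inr v⁆ * ⁅inl h, inr v⁆⁻¹`, and dually
-- `inr k * ⁅inl u, inr v⁆ * (inr k)⁻¹ = ⁅inl u, inr k⁆⁻¹ * ⁅inl u, inr (k * v)⁆`.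
noncomputable def inlConj (h : G₁) : FreeComm G₁ G₂ →* FreeComm G₁ G₂ :=
  FreeGroup.lift fun s => formalComm (h * s.1.1) s.1.2 * (formalComm h s.1.2)⁻¹

noncomputable def inrConj (k : G₂) : FreeComm G₁ G₂ →* FreeComm G₁ G₂ :=
  FreeGroup.lift fun s => (formalComm s.1.1 k)⁻¹ * formalComm s.1.1 (k * s.1.2)

lemma inlConj_formalComm (h a : G₁) (b : G₂) :
    inlConj h (formalComm a b) = formalComm (h * a) b * (formalComm h b)⁻¹ :=
  lift_formalComm (f := fun a b => formalComm (h * a) b * (formalComm h b)⁻¹)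
    (by simp) (by simp) a b

lemma inrConj_formalComm (k : G₂) (a : G₁) (b : G₂) :
    inrConj k (formalComm a b) = (formalComm a k)⁻¹ * formalComm a (k * b) :=
  lift_formalComm (f := fun a b => (formalComm a k)⁻¹ * formalComm a (k * b))
    (by simp) (by simp) a b

lemma inlConj_one (x : FreeComm G₁ G₂) : inlConj 1 x = x := by
  suffices inlConj (1 : G₁) = MonoidHom.id (FreeComm G₁ G₂) from DFunLike.congr_fun this x
  refine FreeGroup.ext_hom _ _ fun s => ?_
  simp [← formalComm_eq_of, inlConj_formalComm]

lemma inrConj_one (x : FreeComm G₁ G₂) : inrConj 1 x = x := by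
  suffices inrConj (1 : G₂) = MonoidHom.id (FreeComm G₁ G₂) from DFunLike.congr_fun this x
  refine FreeGroup.ext_hom _ _ fun s => ?_
  simp [← formalComm_eq_of, inrConj_formalComm]

lemma inlConj_mul (h h' : G₁) (x : FreeComm G₁ G₂) :
    inlConj (h * h') x = inlConj h (inlConj h' x) := by
  suffices inlConj (h * h') = (inlConj h).comp (inlConj h' : FreeComm G₁ G₂ →* _) from
    DFunLike.congr_fun this x
  refine FreeGroup.ext_hom _ _ fun s => ?_
  simp only [← formalComm_eq_of, MonoidHom.comp_apply, inlConj_formalComm, map_mul, map_inv,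
    mul_assoc]
  group

lemma inrConj_mul (k k' : G₂) (x : FreeComm G₁ G₂) :
    inrConj (k * k') x = inrConj k (inrConj k' x) := by
  suffices inrConj (k * k') = (inrConj k).comp (inrConj k' : FreeComm G₁ G₂ →* _) from
    DFunLike.congr_fun this x
  refine FreeGroup.ext_hom _ _ fun s => ?_
  simp only [← formalComm_eq_of, MonoidHom.comp_apply, inrConj_formalComm, map_mul, map_inv,
    mul_assoc]
  group

lemma toCoprod_inlConj (h : G₁) (x : FreeComm G₁ G₂) :
    toCoprod (inlConj h x) = inl h * toCoprod x * (inl h)⁻¹ := by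
  suffices toCoprod.comp (inlConj h) = (MulAut.conj (inl h)).toMonoidHom.comp toCoprod from
    DFunLike.congr_fun this x
  refine FreeGroup.ext_hom _ _ fun s => ?_
  simp only [← formalComm_eq_of, MonoidHom.comp_apply, inlConj_formalComm, map_mul, map_inv,
    toCoprod_formalComm, commutatorElement_def, MulEquiv.coe_toMonoidHom, MulAut.conj_apply]
  group

lemma toCoprod_inrConj (k : G₂) (x : FreeComm G₁ G₂) :
    toCoprod (inrConj k x) = inr k * toCoprod x * (inr k)⁻¹ := by
  suffices toCoprod.comp (inrConj k) = (MulAut.conj (inr k)).toMonoidHom.comp toCoprod from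
    DFunLike.congr_fun this x
  refine FreeGroup.ext_hom _ _ fun s => ?_
  simp only [← formalComm_eq_of, MonoidHom.comp_apply, inrConj_formalComm, map_mul, map_inv,
    toCoprod_formalComm, commutatorElement_def, MulEquiv.coe_toMonoidHom, MulAut.conj_apply]
  group

lemma inlConj_inrConj_commutator (a : G₁) (b : G₂) (x : FreeComm G₁ G₂) :
    inlConj a (inrConj b (inlConj a⁻¹ (inrConj b⁻¹ x))) =
      formalComm a b * x * (formalComm a b)⁻¹ := by
  suffices (inlConj a).comp ((inrConj b).comp ((inlConj a⁻¹).comp (inrConj b⁻¹))) =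
      (MulAut.conj (formalComm a b)).toMonoidHom from DFunLike.congr_fun this x
  refine FreeGroup.ext_hom _ _ fun s => ?_
  simp only [← formalComm_eq_of, MonoidHom.comp_apply, map_mul, map_inv, inlConj_formalComm,
    inrConj_formalComm, mul_inv_cancel, mul_inv_cancel_left, formalComm_one_left,
    formalComm_one_right, one_mul, mul_one, MulEquiv.coe_toMonoidHom, MulAut.conj_apply]
  group

variable (G₁ G₂) in
@[ext]
structure NormalForm where
  word : FreeComm G₁ G₂
  left : G₁
  right : G₂

namespace NormalForm

noncomputable def eval (p : NormalForm G₁ G₂) : Coprod G₁ G₂ :=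
  toCoprod p.word * inl p.left * inr p.right

lemma toProd_eval (p : NormalForm G₁ G₂) : toProd p.eval = (p.left, p.right) := by
  simp [eval, ← MonoidHom.comp_apply toProd, toProd_comp_toCoprod]

noncomputable def actInl : G₁ →* Function.End (NormalForm G₁ G₂) where
  toFun h p := ⟨inlConj h p.word, h * p.left, p.right⟩
  map_one' := funext fun p => NormalForm.ext (inlConj_one p.word) (one_mul p.left) rfl
  map_mul' h h' := funext fun p =>
    NormalForm.ext (inlConj_mul h h' p.word) (mul_assoc h h' p.left) rfl

-- `inr k * inl a = ⁅inl a, inr k⁆⁻¹ * inl a * inr k`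
noncomputable def actInr : G₂ →* Function.End (NormalForm G₁ G₂) where
  toFun k p := ⟨inrConj k p.word * (formalComm p.left k)⁻¹, p.left, k * p.right⟩
  map_one' := funext fun p => NormalForm.ext (by
    show inrConj 1 p.word * (formalComm p.left 1)⁻¹ = p.word
    simp [inrConj_one]) rfl (one_mul p.right)
  map_mul' k k' := funext fun p => NormalForm.ext (by
    show _ = inrConj k (inrConj k' p.word * (formalComm p.left k')⁻¹) * (formalComm p.left k)⁻¹
    simp only [map_mul, map_inv, inrConj_mul, inrConj_formalComm]
    group) rfl (mul_assoc k k' p.right)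

noncomputable instance : MulAction (Coprod G₁ G₂) (NormalForm G₁ G₂) :=
  MulAction.compHom _ (Coprod.lift actInl actInr)

lemma inl_smul (h : G₁) (p : NormalForm G₁ G₂) :
    (inl h : Coprod G₁ G₂) • p = ⟨inlConj h p.word, h * p.left, p.right⟩ :=
  congrFun (lift_apply_inl actInl actInr h) p

lemma inr_smul (k : G₂) (p : NormalForm G₁ G₂) :
    (inr k : Coprod G₁ G₂) • p =
      ⟨inrConj k p.word * (formalComm p.left k)⁻¹, p.left, k * p.right⟩ :=
  congrFun (lift_apply_inr actInl actInr k) p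

lemma eval_smul (w : Coprod G₁ G₂) (p : NormalForm G₁ G₂) : (w • p).eval = w * p.eval := by
  induction w using Coprod.induction_on generalizing p with
  | inl h =>
    simp only [inl_smul, eval, toCoprod_inlConj, map_mul]
    group
  | inr k =>
    simp only [inr_smul, eval, toCoprod_inrConj, map_mul, map_inv, toCoprod_formalComm,
      commutatorElement_def]
    group
  | mul v w hv hw => rw [mul_smul, hv, hw, mul_assoc]

lemma exists_eval_eq (w : Coprod G₁ G₂) : ∃ p : NormalForm G₁ G₂, p.eval = w :=
  ⟨w • ⟨1, 1, 1⟩, by rw [eval_smul]; simp [eval]⟩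

lemma commutator_smul (a : G₁) (b : G₂) (x : FreeComm G₁ G₂) :
    ⁅(inl a : Coprod G₁ G₂), (inr b : Coprod G₁ G₂)⁆ • (⟨x, 1, 1⟩ : NormalForm G₁ G₂) =
      ⟨formalComm a b * x, 1, 1⟩ := by
  simp only [commutatorElement_def, mul_smul, ← map_inv, inl_smul, inr_smul]
  simp [inlConj_formalComm, inlConj_inrConj_commutator]

lemma toCoprod_smul (x y : FreeComm G₁ G₂) :
    toCoprod x • (⟨y, 1, 1⟩ : NormalForm G₁ G₂) = ⟨x * y, 1, 1⟩ := by
  induction x using FreeGroup.induction_on generalizing y with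
  | C1 => simp
  | of s => rw [← formalComm_eq_of, toCoprod_formalComm, commutator_smul]
  | inv_of s ih => rw [map_inv, inv_smul_eq_iff, ih, mul_inv_cancel_left]
  | mul x x' hx hx' => rw [map_mul, mul_smul, hx', hx, mul_assoc]

end NormalForm

open NormalForm

lemma toCoprod_injective : Function.Injective (toCoprod : FreeComm G₁ G₂ →* Coprod G₁ G₂) := by
  intro x x' h
  have hx : toCoprod x • (⟨1, 1, 1⟩ : NormalForm G₁ G₂) = toCoprod x' • ⟨1, 1, 1⟩ := by
    rw [h]
  simpa [toCoprod_smul] using hx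

lemma ker_toProd_eq_range_toCoprod :
    (toProd : Coprod G₁ G₂ →* G₁ × G₂).ker = toCoprod.range := by
  refine le_antisymm (fun w hw => ?_) ((MonoidHom.range_le_ker_iff _ _).mpr toProd_comp_toCoprod)
  · obtain ⟨⟨x, a, b⟩, rfl⟩ := exists_eval_eq w
    obtain ⟨rfl, rfl⟩ : a = 1 ∧ b = 1 := by simpa [toProd_eval] using hw
    exact ⟨x, by simp [eval]⟩

lemma ker_toProd_eq_closure :
    (toProd : Coprod G₁ G₂ →* G₁ × G₂).ker =
      Subgroup.closure {w | ∃ (a : G₁) (b : G₂), w = ⁅(inl a : Coprod G₁ G₂), inr b⁆} := by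
  rw [ker_toProd_eq_range_toCoprod]
  refine le_antisymm ?_ ((Subgroup.closure_le _).mpr ?_)
  · rw [toCoprod, FreeGroup.range_lift_eq_closure]
    exact Subgroup.closure_mono (Set.range_subset_iff.mpr fun s => ⟨_, _, rfl⟩)
  · rintro _ ⟨a, b, rfl⟩
    exact ⟨formalComm a b, toCoprod_formalComm a b⟩

end Monoid.Coprod.KerToProd

open Monoid.Coprod.KerToProd in
theorem stmt_4 (G₁ G₂ : Type) [Group G₁] [Group G₂] :
    IsFreeGroup (Monoid.Coprod.toProd : Monoid.Coprod G₁ G₂ →* G₁ × G₂).ker ∧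
      (Monoid.Coprod.toProd : Monoid.Coprod G₁ G₂ →* G₁ × G₂).ker =
        Subgroup.closure { w : Monoid.Coprod G₁ G₂ | ∃ (g₁ : G₁) (g₂ : G₂),
          w = Monoid.Coprod.inl g₁ * Monoid.Coprod.inr g₂ *
            (Monoid.Coprod.inl g₁)⁻¹ * (Monoid.Coprod.inr g₂)⁻¹ } := by
  refine ⟨?_, ker_toProd_eq_closure⟩
  rw [ker_toProd_eq_range_toCoprod]
  exact IsFreeGroup.ofMulEquiv (MonoidHom.ofInjective toCoprod_injective)
end

section
/- If G₁ and G₂ are finite groups, then the free product G₁ ∗ G₂ is virtually free: it contains a subgroup of finite index which is a free group. -/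
/-!
Let `K ≤ G₁ ∗ G₂` be generated by the commutators `⁅a, b⁆` with `a ∈ G₁`, `b ∈ G₂` (it is the
kernel of `G₁ ∗ G₂ → G₁ × G₂`). Since `a' b a = b (a' a) ⁅(a' a)⁻¹, b⁻¹⁆ ⁅a⁻¹, b⁻¹⁆⁻¹`, every
element lies in a coset `b a K`, so `K` has index at most `|G₁| |G₂|`. The commutators with
`a, b ≠ 1` freely generate `K` by ping-pong on reduced words: `⁅a, b⁆` sends every word that does
not begin with `b a` to one that begins with `a b`, and `⁅a, b⁆⁻¹ = ⁅b, a⁆` does the reverse.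
-/

/-- A group is virtually free if it has a free subgroup of finite index. -/
def VirtuallyFree (G : Type) [Group G] : Prop :=
  ∃ H : Subgroup G, H.FiniteIndex ∧ IsFreeGroup H

open Monoid CoprodI Function
open scoped Pointwise commutatorElement

section PingPong
variable {ι G α : Type*} [Group G] [MulAction G α]

theorem pow_succ_smul_compl_subset {g : G} {X Y : Set α} (hXY : Disjoint X Y)
    (h : g • Yᶜ ⊆ X) : ∀ n : ℕ, g ^ (n + 1) • Yᶜ ⊆ X
  | 0 => by simpa using h
  | n + 1 =>
    calc g ^ (n + 1 + 1) • Yᶜ = g ^ (n + 1) • g • Yᶜ := by rw [pow_succ, mul_smul]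
      _ ⊆ g ^ (n + 1) • Yᶜ := Set.smul_set_mono (h.trans hXY.subset_compl_right)
      _ ⊆ X := pow_succ_smul_compl_subset hXY h n

theorem zpow_smul_compl_subset {g : G} {X Y : Set α} (hXY : Disjoint X Y)
    (hX : g • Yᶜ ⊆ X) (hY : g⁻¹ • Xᶜ ⊆ Y) {n : ℤ} (hn : n ≠ 0) :
    g ^ n • (X ∪ Y)ᶜ ⊆ X ∪ Y := by
  rcases n with (_ | k) | k
  · exact absurd rfl hn
  · calc g ^ ((k + 1 : ℕ) : ℤ) • (X ∪ Y)ᶜ ⊆ g ^ (k + 1) • Yᶜ := by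
          rw [zpow_natCast]; exact Set.smul_set_mono (by simp)
      _ ⊆ X ∪ Y := (pow_succ_smul_compl_subset hXY hX k).trans Set.subset_union_left
  · calc g ^ Int.negSucc k • (X ∪ Y)ᶜ ⊆ g⁻¹ ^ (k + 1) • Xᶜ := by
          rw [zpow_negSucc, ← inv_pow]; exact Set.smul_set_mono (by simp)
      _ ⊆ X ∪ Y := (pow_succ_smul_compl_subset hXY.symm hY k).trans Set.subset_union_right

theorem FreeGroup.injective_lift_of_zpow_ping_pong (g : ι → G) (X : ι → Set α) (x₀ : α)
    (hx₀ : ∀ i, x₀ ∉ X i) (hdisj : Pairwise (Disjoint on X))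
    (hpp : ∀ i (n : ℤ), n ≠ 0 → g i ^ n • (X i)ᶜ ⊆ X i) :
    Function.Injective (FreeGroup.lift g) := by
  rcases isEmpty_or_nonempty ι with hι | hι
  · exact Function.injective_of_subsingleton _
  obtain ⟨i₀⟩ := id hι
  -- Ping-pong for the free product of the cyclic groups `⟨g i⟩` and one trivial factor with
  -- ping-pong set `{x₀}`; the extra factor makes the index type nontrivial even when `ι` is not.
  let H : Option ι → Type := fun o => FreeGroup (o.elim Empty fun _ => Unit)
  let f : ∀ o, H o →* G
    | none => 1
    | some i => FreeGroup.lift fun _ => g i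
  let ψ : FreeGroup ι →* CoprodI H :=
    FreeGroup.lift fun i => CoprodI.of (M := H) (i := some i) (FreeGroup.of ())
  let φ : CoprodI H →* FreeGroup ι := CoprodI.lift fun
    | none => 1
    | some i => FreeGroup.lift fun _ => FreeGroup.of i
  have hψ : Function.LeftInverse φ ψ := by
    refine DFunLike.congr_fun (f := φ.comp ψ) (g := MonoidHom.id _)
      (FreeGroup.ext_hom _ _ fun i => ?_)
    simp only [ψ, φ, MonoidHom.comp_apply, FreeGroup.lift_apply_of]
    erw [CoprodI.lift_of]
  have hlift : FreeGroup.lift g = (CoprodI.lift f).comp ψ := by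
    ext i
    simp only [ψ, MonoidHom.comp_apply, FreeGroup.lift_apply_of]
    erw [CoprodI.lift_of]
    exact FreeGroup.lift_apply_of.symm
  rw [hlift, MonoidHom.coe_comp]
  refine Function.Injective.comp ?_ hψ.injective
  let Y : Option ι → Set α := fun o => o.elim {x₀} X
  refine lift_injective_of_ping_pong f (Or.inr ⟨some i₀, ?_⟩) Y ?_ ?_ ?_
  · show 3 ≤ Cardinal.mk (FreeGroup Unit)
    rw [FreeGroup.freeGroupUnitEquivInt.cardinal_eq, Cardinal.mk_denumerable]
    exact Cardinal.natCast_le_aleph0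
  · rintro (_ | i)
    · exact ⟨x₀, rfl⟩
    · have := hpp i 1 one_ne_zero (Set.smul_mem_smul_set (a := g i ^ (1 : ℤ)) (hx₀ i))
      exact ⟨_, this⟩
  · rintro (_ | i) (_ | j) hij <;> simp only [onFun, Y, Option.elim, Set.disjoint_singleton_left,
      Set.disjoint_singleton_right]
    · exact absurd rfl hij
    · exact hx₀ j
    · exact hx₀ i
    · exact hdisj (fun h => hij (congrArg some h))
  · rintro (_ | i) o hio h hh
    · exact absurd (Subsingleton.elim (α := FreeGroup Empty) h 1) hh
    obtain ⟨n, rfl⟩ := FreeGroup.freeGroupUnitEquivInt.symm.surjective h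
    have hn : n ≠ 0 := by rintro rfl; exact hh rfl
    have hY : Y o ⊆ (X i)ᶜ := by
      rcases o with _ | j
      · simpa [Y] using hx₀ i
      · exact (hdisj fun h => hio (congrArg some h)).subset_compl_left
    calc f (some i) (FreeGroup.freeGroupUnitEquivInt.symm n) • Y o ⊆ g i ^ n • (X i)ᶜ := by
          show (FreeGroup.lift fun _ : Unit => g i) (FreeGroup.of () ^ n) • Y o ⊆ _
          rw [map_zpow, FreeGroup.lift_apply_of]
          exact Set.smul_set_mono hY
      _ ⊆ X i := hpp i n hn
end PingPong

namespace Monoid.CoprodI.Word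

variable {ι : Type*} {M : ι → Type*} [∀ i, Group (M i)] {i j : ι}

def startingWith (x : M i) (y : M j) : Set (Word M) :=
  {w | ∃ r, w.toList = ⟨i, x⟩ :: ⟨j, y⟩ :: r}

theorem disjoint_startingWith {x x' : M i} {y y' : M j} (h : x ≠ x' ∨ y ≠ y') :
    Disjoint (startingWith x y) (startingWith x' y') := by
  refine Set.disjoint_left.2 fun w ⟨r, hr⟩ ⟨r', hr'⟩ => ?_
  simp_all

theorem disjoint_startingWith_swap (hij : i ≠ j) (x : M i) (y : M j) (y' : M j) (x' : M i) :
    Disjoint (startingWith x y) (startingWith y' x') := by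
  refine Set.disjoint_left.2 fun w ⟨r, hr⟩ ⟨r', hr'⟩ => ?_
  simp_all

variable [DecidableEq ι] [∀ i, DecidableEq (M i)]

theorem of_mul_of_smul_toList (hij : i ≠ j) {x : M i} {y : M j} (hx : x ≠ 1) (hy : y ≠ 1)
    {w : Word M} (hw : w.fstIdx ≠ some j) :
    ((of x * of y : CoprodI M) • w).toList = ⟨i, x⟩ :: ⟨j, y⟩ :: w.toList := by
  rw [mul_smul, ← cons_eq_smul (h1 := hw) (h2 := hy),
    ← cons_eq_smul (h1 := by simpa using hij.symm) (h2 := hx)]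
  rfl

theorem commutatorElement_smul_mem_startingWith (hij : i ≠ j) {x : M i} {y : M j}
    (hx : x ≠ 1) (hy : y ≠ 1) {w : Word M} (hw : w ∉ startingWith y x) :
    ⁅(of x : CoprodI M), of y⁆ • w ∈ startingWith x y := by
  obtain ⟨v, rfl⟩ : ∃ v : Word M, (of y * of x : CoprodI M) • v = w :=
    ⟨_, smul_inv_smul _ w⟩
  have hv : v.fstIdx = some i := by
    by_contra hv
    exact hw ⟨v.toList, of_mul_of_smul_toList hij.symm hy hx hv⟩
  rw [smul_smul, show ⁅(of x : CoprodI M), of y⁆ * (of y * of x) = of x * of y by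
    rw [commutatorElement_def]; group]
  exact ⟨v.toList, of_mul_of_smul_toList hij hx hy (by simpa [hv] using hij)⟩

theorem commutatorElement_zpow_smul_subset (hij : i ≠ j) {x : M i} {y : M j}
    (hx : x ≠ 1) (hy : y ≠ 1) {n : ℤ} (hn : n ≠ 0) :
    ⁅(of x : CoprodI M), of y⁆ ^ n • (startingWith x y ∪ startingWith y x)ᶜ
      ⊆ startingWith x y ∪ startingWith y x := by
  refine zpow_smul_compl_subset (disjoint_startingWith_swap hij x y y x) ?_ ?_ hn
  · exact Set.smul_set_subset_iff.2 fun w hw =>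
      commutatorElement_smul_mem_startingWith hij hx hy hw
  · rw [commutatorElement_inv]
    exact Set.smul_set_subset_iff.2 fun w hw =>
      commutatorElement_smul_mem_startingWith hij.symm hy hx hw

end Monoid.CoprodI.Word

theorem VirtuallyFree.of_mulEquiv {G G' : Type} [Group G] [Group G'] (h : VirtuallyFree G)
    (e : G ≃* G') : VirtuallyFree G' := by
  obtain ⟨H, hH, hfree⟩ := h
  exact ⟨H.map (e : G →* G'), ⟨by rw [Subgroup.index_map_equiv]; exact hH.index_ne_zero⟩,
    IsFreeGroup.ofMulEquiv (e.subgroupMap H)⟩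

section TwoFactors

universe u

variable (A B : Type u) [Group A] [Group B]

instance instGroupCond : ∀ b : Bool, Group (cond b A B)
  | true => ‹Group A›
  | false => ‹Group B›

-- The free product as an indexed coproduct, which is where Mathlib's reduced words live.
local notation:35 A:36 " ∗ᵢ " B:35 => CoprodI fun b : Bool => cond b A B

def coprodEquivCoprodI : Coprod A B ≃* A ∗ᵢ B :=
  MonoidHom.toMulEquiv
    (Coprod.lift (of (M := fun b : Bool => cond b A B) (i := true))
      (of (M := fun b : Bool => cond b A B) (i := false)))
    (CoprodI.lift fun
      | true => Coprod.inl
      | false => Coprod.inr)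
    (by apply Coprod.hom_ext <;> ext <;> simp)
    (by ext (_ | _) <;> simp)

variable {A B}

def pairCommutator (p : A × B) : A ∗ᵢ B :=
  ⁅(of (i := true) p.1 : A ∗ᵢ B), of (i := false) p.2⁆

variable (A B)

def pairCommutatorSubgroup : Subgroup (A ∗ᵢ B) :=
  (FreeGroup.lift fun s : {p : A × B // p.1 ≠ 1 ∧ p.2 ≠ 1} => pairCommutator s.1).range

variable {A B}

theorem pairCommutator_mem (p : A × B) : pairCommutator p ∈ pairCommutatorSubgroup A B := by
  by_cases hp : p.1 ≠ 1 ∧ p.2 ≠ 1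
  · exact ⟨FreeGroup.of ⟨p, hp⟩, FreeGroup.lift_apply_of⟩
  · rcases not_and_or.1 hp with h | h <;>
      simp [pairCommutator, not_not.1 h, one_mem]

theorem exists_inv_mul_mem_pairCommutatorSubgroup (g : A ∗ᵢ B) :
    ∃ (a : A) (b : B), (of (i := false) b * of (i := true) a : A ∗ᵢ B)⁻¹ * g
      ∈ pairCommutatorSubgroup A B := by
  induction g using CoprodI.induction_left with
  | one => exact ⟨1, 1, by simp [one_mem]⟩
  | @mul i m g ih =>
    obtain ⟨a, b, h⟩ := ih
    cases i
    · change B at m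
      refine ⟨a, m * b, ?_⟩
      convert h using 1
      simp only [map_mul]
      group
    · change A at m
      refine ⟨m * a, b, ?_⟩
      have : (of (i := false) b * of (i := true) (m * a) : A ∗ᵢ B)⁻¹ * (of (i := true) m * g)
          = pairCommutator ((m * a)⁻¹, b⁻¹) * (pairCommutator (a⁻¹, b⁻¹))⁻¹
            * ((of (i := false) b * of (i := true) a)⁻¹ * g) := by
        simp only [pairCommutator, commutatorElement_def, map_mul, map_inv]
        group
      rw [this]
      exact mul_mem (mul_mem (pairCommutator_mem _) (inv_mem (pairCommutator_mem _))) h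

theorem pairCommutatorSubgroup_finiteIndex [Finite A] [Finite B] :
    (pairCommutatorSubgroup A B).FiniteIndex := by
  have : Finite ((A ∗ᵢ B) ⧸ pairCommutatorSubgroup A B) := by
    refine Finite.of_surjective (fun p : A × B =>
      ((of (i := false) p.2 * of (i := true) p.1 : A ∗ᵢ B) :
        (A ∗ᵢ B) ⧸ pairCommutatorSubgroup A B)) fun q => ?_
    induction q using QuotientGroup.induction_on with | H g => ?_
    obtain ⟨a, b, h⟩ := exists_inv_mul_mem_pairCommutatorSubgroup g
    exact ⟨(a, b), QuotientGroup.eq.2 h⟩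
  exact Subgroup.finiteIndex_of_finite_quotient

theorem injective_lift_pairCommutator :
    Function.Injective
      (FreeGroup.lift fun s : {p : A × B // p.1 ≠ 1 ∧ p.2 ≠ 1} => pairCommutator s.1) := by
  classical
  refine FreeGroup.injective_lift_of_zpow_ping_pong _
    (fun s => Word.startingWith (M := fun b : Bool => cond b A B) (i := true) (j := false)
      s.1.1 s.1.2 ∪ Word.startingWith (M := fun b : Bool => cond b A B) (i := false) (j := true)
      s.1.2 s.1.1) Word.empty ?_ ?_ ?_
  · rintro s (⟨r, hr⟩ | ⟨r, hr⟩) <;> simp at hr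
  · rintro ⟨⟨a, b⟩, _⟩ ⟨⟨a', b'⟩, _⟩ hst
    have hne : a ≠ a' ∨ b ≠ b' := by
      rw [← not_and_or]
      rintro ⟨rfl, rfl⟩
      exact hst rfl
    exact ((Word.disjoint_startingWith hne).union_right
      (Word.disjoint_startingWith_swap (by decide) _ _ _ _)).union_left
      ((Word.disjoint_startingWith_swap (by decide) _ _ _ _).union_right
        (Word.disjoint_startingWith hne.symm))
  · rintro ⟨⟨a, b⟩, ha, hb⟩ n hn
    exact Word.commutatorElement_zpow_smul_subset (by decide) ha hb hn

theorem isFreeGroup_pairCommutatorSubgroup : IsFreeGroup (pairCommutatorSubgroup A B) :=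
  IsFreeGroup.ofMulEquiv (MonoidHom.ofInjective injective_lift_pairCommutator)

end TwoFactors

theorem stmt_5 (G₁ G₂ : Type) [Group G₁] [Group G₂] [Finite G₁] [Finite G₂] :
    VirtuallyFree (Monoid.Coprod G₁ G₂) :=
  VirtuallyFree.of_mulEquiv
    ⟨pairCommutatorSubgroup G₁ G₂, pairCommutatorSubgroup_finiteIndex,
      isFreeGroup_pairCommutatorSubgroup⟩
    (coprodEquivCoprodI G₁ G₂).symm
end

section
/- Let X be a set, let A = X ⊕ X (two disjoint copies of X), and let π : A* → F(X) be the monoid homomorphism to the free group on X sending the first copy of x to x and the second copy of x to x⁻¹. For every word w = a₁⋯aₙ ∈ A* with π(w) = 1, there exists a relation ⌢ ⊆ {1, …, n} × {1, …, n} such that: (1) i ⌢ j implies i < j; (2) every position k ∈ {1, …, n} occurs in exactly one pair of ⌢ (as left or right endpoint, not both); (3) if i₁ ⌢ j₁ and i₂ ⌢ j₂ with i₁ < i₂, then either j₂ < j₁ or j₁ < i₂; (4) whenever i ⌢ j, the letters a_i and a_j map under π to mutually inverse elements of F(X), and the factor a_{i+1}⋯a_{j-1} satisfies π(a_{i+1}⋯a_{j-1})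 = 1. -/
/-- The canonical monoid homomorphism `A* → F(X)` for the alphabet `A = X ⊕ X`,
sending the first copy of `x` to the generator `x` and the second copy to `x⁻¹`. -/
def freeGroupPi (X : Type) : FreeMonoid (X ⊕ X) →* FreeGroup X :=
  FreeMonoid.lift (Sum.elim (fun x => FreeGroup.of x) fun x => (FreeGroup.of x)⁻¹)

/-!
A nonempty word with trivial image in `F(X)` is not freely reduced, so it has two adjacent
letters `a b` with `π(a) π(b) = 1`. Deleting them and inducting on the length, the matching of
the shorter word is transported along the order embedding that skips the two deleted positions,
and the pair `a ⌢ b` is added; nesting survives because the new pair is adjacent.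

Condition (4) is tracked through the prefix products `P(p) = π(a₁ ⋯ a_p)`: it holds for `i ⌢ j`
as soon as `P(i - 1) = P(j)` and `P(i) = P(j - 1)`, and deleting a cancelling pair leaves the
prefix products at the surviving positions unchanged.
-/

theorem FreeGroup.exists_eq_append_cancel_of_mk_eq_one {α : Type*} {L : List (α × Bool)}
    (hL : L ≠ []) (h : FreeGroup.mk L = 1) :
    ∃ L₁ L₂ x b, L = L₁ ++ (x, b) :: (x, !b) :: L₂ := by
  classical
  have hnot : ¬ FreeGroup.IsReduced L := fun hred => hL <| by
    rw [← hred.reduce_eq, ← FreeGroup.toWord_mk, h, FreeGroup.toWord_one]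
  obtain ⟨L', hstep⟩ : ∃ L', FreeGroup.Red.Step L L' := by
    simpa [FreeGroup.isReduced_iff_not_step] using hnot
  cases hstep
  exact ⟨_, _, _, _, rfl⟩

def skipTwo (m k : ℕ) : ℕ := if k < m then k else k + 2

section SkipTwo

variable {m : ℕ}

theorem skipTwo_strictMono : StrictMono (skipTwo m) := by
  intro k l hkl
  unfold skipTwo
  split_ifs <;> omega

theorem skipTwo_lt_or_gt (m k : ℕ) : skipTwo m k < m ∨ m + 1 < skipTwo m k := by
  unfold skipTwo
  split_ifs <;> omega

theorem exists_skipTwo_eq {p : ℕ} (h₀ : p ≠ m) (h₁ : p ≠ m + 1) : ∃ k, skipTwo m k = p := by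
  by_cases hp : p < m
  · exact ⟨p, if_pos hp⟩
  · exact ⟨p - 2, by unfold skipTwo; split_ifs <;> omega⟩

theorem skipTwo_lt_add_two_iff {n k : ℕ} (hm : m ≤ n) : skipTwo m k < n + 2 ↔ k < n := by
  unfold skipTwo
  split_ifs <;> omega

end SkipTwo

/-- Positions are the natural numbers below `n` rather than `Fin n`, so that reindexing along
`skipTwo` needs no casts. -/
structure IsNestedMatching (n : ℕ) (r : ℕ → ℕ → Prop) : Prop where
  lt {i j : ℕ} : r i j → i < j
  lt_length {i j : ℕ} : r i j → j < n
  covers {k : ℕ} : k < n → ∃ i j, r i j ∧ (i = k ∨ j = k)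
  unique {i j i' j' k : ℕ} :
    r i j → r i' j' → (i = k ∨ j = k) → (i' = k ∨ j' = k) → i = i' ∧ j = j'
  nested {i₁ j₁ i₂ j₂ : ℕ} : r i₁ j₁ → r i₂ j₂ → i₁ < i₂ → j₂ < j₁ ∨ j₁ < i₂

def insertPair (m : ℕ) (r : ℕ → ℕ → Prop) (i j : ℕ) : Prop :=
  (i = m ∧ j = m + 1) ∨ ∃ i' j', r i' j' ∧ skipTwo m i' = i ∧ skipTwo m j' = j

namespace IsNestedMatching

variable {n : ℕ} {r : ℕ → ℕ → Prop}

theorem empty : IsNestedMatching 0 fun _ _ => False where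
  lt := False.elim
  lt_length := False.elim
  covers h := absurd h (Nat.not_lt_zero _)
  unique h := h.elim
  nested h := h.elim

theorem insertPair (hr : IsNestedMatching n r) {m : ℕ} (hm : m ≤ n) :
    IsNestedMatching (n + 2) (_root_.insertPair m r) where
  lt := by
    rintro _ _ (⟨rfl, rfl⟩ | ⟨i, j, h, rfl, rfl⟩)
    · exact Nat.lt_succ_self _
    · exact skipTwo_strictMono (hr.lt h)
  lt_length := by
    rintro _ _ (⟨-, rfl⟩ | ⟨i, j, h, -, rfl⟩)
    · omega
    · exact (skipTwo_lt_add_two_iff hm).mpr (hr.lt_length h)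
  covers := by
    intro k hk
    by_cases hkm : k = m ∨ k = m + 1
    · exact ⟨m, m + 1, Or.inl ⟨rfl, rfl⟩, hkm.imp Eq.symm Eq.symm⟩
    push Not at hkm
    obtain ⟨k, rfl⟩ := exists_skipTwo_eq hkm.1 hkm.2
    obtain ⟨i, j, h, hij⟩ := hr.covers ((skipTwo_lt_add_two_iff hm).mp hk)
    refine ⟨skipTwo m i, skipTwo m j, Or.inr ⟨i, j, h, rfl, rfl⟩, ?_⟩
    rcases hij with rfl | rfl
    exacts [Or.inl rfl, Or.inr rfl]
  unique := by
    rintro _ _ _ _ k (⟨hi, hj⟩ | ⟨i, j, h, rfl, rfl⟩) (⟨hi', hj'⟩ | ⟨i', j', h', rfl, rfl⟩) hk hk'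
    · exact ⟨hi.trans hi'.symm, hj.trans hj'.symm⟩
    · have := skipTwo_lt_or_gt m i'
      have := skipTwo_lt_or_gt m j'
      omega
    · have := skipTwo_lt_or_gt m i
      have := skipTwo_lt_or_gt m j
      omega
    · rcases hk with rfl | rfl <;>
      · simp only [skipTwo_strictMono.injective.eq_iff] at hk' ⊢
        exact hr.unique h h' (by tauto) hk'
  nested := by
    rintro _ _ _ _ (⟨hi, hj⟩ | ⟨i, j, h, rfl, rfl⟩) (⟨hi', hj'⟩ | ⟨i', j', h', rfl, rfl⟩) hlt
    · omega
    · have := skipTwo_lt_or_gt m i'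
      omega
    · have := skipTwo_lt_or_gt m j
      omega
    · simp only [skipTwo_strictMono.lt_iff_lt] at hlt ⊢
      exact hr.nested h h' hlt

theorem existsUnique_fin (hr : IsNestedMatching n r) (k : Fin n) :
    ∃! p : Fin n × Fin n, r p.1 p.2 ∧ (p.1 = k ∨ p.2 = k) := by
  obtain ⟨i, j, h, hk⟩ := hr.covers k.2
  refine ⟨(⟨i, (hr.lt h).trans (hr.lt_length h)⟩, ⟨j, hr.lt_length h⟩), ⟨h, ?_⟩, ?_⟩
  · simpa only [Fin.ext_iff] using hk
  · rintro ⟨i', j'⟩ ⟨h', hk'⟩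
    simp only [Fin.ext_iff] at hk'
    simpa [Prod.ext_iff, Fin.ext_iff] using hr.unique h' h hk' hk

end IsNestedMatching

section Word

variable {X : Type}

def signedLetter : X ⊕ X → X × Bool := Sum.elim (·, true) (·, false)

theorem freeGroupPi_of (a : X ⊕ X) :
    freeGroupPi X (FreeMonoid.of a) = FreeGroup.mk [signedLetter a] := by
  cases a <;> rfl

theorem freeGroupPi_ofList (w : List (X ⊕ X)) :
    freeGroupPi X (FreeMonoid.ofList w) = FreeGroup.mk (w.map signedLetter) := by
  induction w with
  | nil => rfl
  | cons a w ih =>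
    rw [FreeMonoid.ofList_cons, map_mul, ih, freeGroupPi_of, FreeGroup.mul_mk, List.map_cons,
      List.singleton_append]

theorem exists_eq_append_cancel_of_freeGroupPi_eq_one {w : List (X ⊕ X)} (hne : w ≠ [])
    (hw : freeGroupPi X (FreeMonoid.ofList w) = 1) :
    ∃ s t a b, w = s ++ a :: b :: t ∧
      freeGroupPi X (FreeMonoid.of a) * freeGroupPi X (FreeMonoid.of b) = 1 := by
  rw [freeGroupPi_ofList] at hw
  obtain ⟨L₁, L₂, x, c, hL⟩ :=
    FreeGroup.exists_eq_append_cancel_of_mk_eq_one (by simpa using hne) hw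
  obtain ⟨s, _, rfl, -, h⟩ := List.map_eq_append_iff.mp hL
  obtain ⟨a, _, rfl, ha, h⟩ := List.map_eq_cons_iff.mp h
  obtain ⟨b, t, rfl, hb, -⟩ := List.map_eq_cons_iff.mp h
  refine ⟨s, t, a, b, rfl, ?_⟩
  rw [freeGroupPi_of, freeGroupPi_of, FreeGroup.mul_mk, ha, hb]
  exact Quot.sound FreeGroup.Red.Step.cons_not

theorem freeGroupPi_append_cancel (s t : List (X ⊕ X)) {a b : X ⊕ X}
    (hab : freeGroupPi X (FreeMonoid.of a) * freeGroupPi X (FreeMonoid.of b) = 1) :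
    freeGroupPi X (FreeMonoid.ofList (s ++ a :: b :: t)) =
      freeGroupPi X (FreeMonoid.ofList (s ++ t)) := by
  simp only [FreeMonoid.ofList_append, FreeMonoid.ofList_cons, map_mul]
  rw [← mul_assoc (freeGroupPi X (FreeMonoid.of a)), hab, one_mul]

def prefixProd (w : List (X ⊕ X)) (p : ℕ) : FreeGroup X :=
  freeGroupPi X (FreeMonoid.ofList (w.take p))

theorem freeGroupPi_drop_take (w : List (X ⊕ X)) {p q : ℕ} (hpq : p ≤ q) :
    freeGroupPi X (FreeMonoid.ofList ((w.drop p).take (q - p))) =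
      (prefixProd w p)⁻¹ * prefixProd w q := by
  obtain ⟨d, rfl⟩ := Nat.exists_eq_add_of_le hpq
  rw [prefixProd, prefixProd, List.take_add, FreeMonoid.ofList_append, map_mul,
    Nat.add_sub_cancel_left, inv_mul_cancel_left]

theorem freeGroupPi_get (w : List (X ⊕ X)) (i : Fin w.length) :
    freeGroupPi X (FreeMonoid.of (w.get i)) = (prefixProd w i)⁻¹ * prefixProd w (i + 1) := by
  rw [← freeGroupPi_drop_take w (Nat.le_add_right _ 1), Nat.add_sub_cancel_left,
    List.drop_eq_getElem_cons i.2]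
  rfl

theorem prefixProd_append_cancel_of_le (s t : List (X ⊕ X)) (a b : X ⊕ X) {p : ℕ}
    (hp : p ≤ s.length) : prefixProd (s ++ a :: b :: t) p = prefixProd (s ++ t) p := by
  simp [prefixProd, List.take_append, Nat.sub_eq_zero_of_le hp]

theorem prefixProd_append_cancel_add_two (s t : List (X ⊕ X)) {a b : X ⊕ X}
    (hab : freeGroupPi X (FreeMonoid.of a) * freeGroupPi X (FreeMonoid.of b) = 1) {p : ℕ}
    (hp : s.length ≤ p) : prefixProd (s ++ a :: b :: t) (p + 2) = prefixProd (s ++ t) p := by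
  obtain ⟨d, rfl⟩ := Nat.exists_eq_add_of_le hp
  simp only [prefixProd, List.take_append,
    List.take_of_length_le (by omega : s.length ≤ s.length + d + 2),
    List.take_of_length_le (Nat.le_add_right s.length d),
    show s.length + d + 2 - s.length = d + 1 + 1 by omega, List.take_succ_cons,
    Nat.add_sub_cancel_left]
  exact freeGroupPi_append_cancel s _ hab

theorem prefixProd_append_cancel_skipTwo (s t : List (X ⊕ X)) {a b : X ⊕ X}
    (hab : freeGroupPi X (FreeMonoid.of a) * freeGroupPi X (FreeMonoid.of b) = 1) (k : ℕ) :
    prefixProd (s ++ a :: b :: t) (skipTwo s.length k) = prefixProd (s ++ t) k ∧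
      prefixProd (s ++ a :: b :: t) (skipTwo s.length k + 1) = prefixProd (s ++ t) (k + 1) := by
  unfold skipTwo
  split_ifs with hk
  · exact ⟨prefixProd_append_cancel_of_le s t a b hk.le, prefixProd_append_cancel_of_le s t a b hk⟩
  · exact ⟨prefixProd_append_cancel_add_two s t hab (by omega),
      prefixProd_append_cancel_add_two s t hab (by omega)⟩

/-- Positions are 0-based: the letter at position `i` sits between `prefixProd w i` and
`prefixProd w (i + 1)`. -/
def IsMatchedPair (w : List (X ⊕ X)) (i j : ℕ) : Prop :=
  prefixProd w i = prefixProd w (j + 1) ∧ prefixProd w (i + 1) = prefixProd w j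

theorem IsMatchedPair.freeGroupPi_get_eq_inv {w : List (X ⊕ X)} {i j : Fin w.length}
    (h : IsMatchedPair w i j) :
    freeGroupPi X (FreeMonoid.of (w.get i)) = (freeGroupPi X (FreeMonoid.of (w.get j)))⁻¹ := by
  rw [freeGroupPi_get, freeGroupPi_get, h.1, h.2, mul_inv_rev, inv_inv]

theorem IsMatchedPair.freeGroupPi_drop_take_eq_one {w : List (X ⊕ X)} {i j : ℕ}
    (h : IsMatchedPair w i j) (hij : i < j) :
    freeGroupPi X (FreeMonoid.ofList ((w.drop (i + 1)).take (j - i - 1))) = 1 := by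
  rw [Nat.sub_sub, freeGroupPi_drop_take w hij, h.2, inv_mul_cancel]

theorem IsMatchedPair.append_cancel_skipTwo {s t : List (X ⊕ X)} {a b : X ⊕ X}
    (hab : freeGroupPi X (FreeMonoid.of a) * freeGroupPi X (FreeMonoid.of b) = 1) {i j : ℕ}
    (h : IsMatchedPair (s ++ t) i j) :
    IsMatchedPair (s ++ a :: b :: t) (skipTwo s.length i) (skipTwo s.length j) := by
  obtain ⟨hi, hi'⟩ := prefixProd_append_cancel_skipTwo s t hab i
  obtain ⟨hj, hj'⟩ := prefixProd_append_cancel_skipTwo s t hab j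
  rw [IsMatchedPair, hi, hi', hj, hj']
  exact h

theorem isMatchedPair_append_cancel (s t : List (X ⊕ X)) {a b : X ⊕ X}
    (hab : freeGroupPi X (FreeMonoid.of a) * freeGroupPi X (FreeMonoid.of b) = 1) :
    IsMatchedPair (s ++ a :: b :: t) s.length (s.length + 1) :=
  ⟨by rw [prefixProd_append_cancel_of_le s t a b le_rfl,
      prefixProd_append_cancel_add_two s t hab le_rfl], rfl⟩

theorem exists_isNestedMatching {w : List (X ⊕ X)}
    (hw : freeGroupPi X (FreeMonoid.ofList w) = 1) :
    ∃ r, IsNestedMatching w.length r ∧ ∀ i j, r i j → IsMatchedPair w i j := by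
  induction hn : w.length using Nat.strong_induction_on generalizing w with
  | _ n ih =>
  subst hn
  rcases eq_or_ne w [] with rfl | hne
  · exact ⟨_, IsNestedMatching.empty, fun _ _ => False.elim⟩
  obtain ⟨s, t, a, b, rfl, hab⟩ := exists_eq_append_cancel_of_freeGroupPi_eq_one hne hw
  have hlen : (s ++ a :: b :: t).length = (s ++ t).length + 2 := by
    simp only [List.length_append, List.length_cons]; omega
  obtain ⟨r, hr, hpair⟩ :=
    ih _ (by omega) (by rwa [← freeGroupPi_append_cancel s t hab]) (w := s ++ t) rfl
  refine ⟨insertPair s.length r, hlen ▸ hr.insertPair (by simp), ?_⟩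
  rintro _ _ (⟨rfl, rfl⟩ | ⟨i, j, h, rfl, rfl⟩)
  · exact isMatchedPair_append_cancel s t hab
  · exact (hpair i j h).append_cancel_skipTwo hab

end Word

theorem stmt_10 {X : Type} (w : List (X ⊕ X))
    (hw : freeGroupPi X (FreeMonoid.ofList w) = 1) :
    ∃ r : Fin w.length → Fin w.length → Prop,
      -- (1) matching edges go forward
      (∀ i j, r i j → i < j) ∧
      -- (2) every position occurs in exactly one matched pair
      (∀ k : Fin w.length,
        ∃! p : Fin w.length × Fin w.length, r p.1 p.2 ∧ (p.1 = k ∨ p.2 = k)) ∧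
      -- (3) nesting (non-crossing) property
      (∀ i₁ j₁ i₂ j₂, r i₁ j₁ → r i₂ j₂ → i₁ < i₂ → (j₂ < j₁ ∨ j₁ < i₂)) ∧
      -- (4) matched letters are mutually inverse and the enclosed factor is trivial
      (∀ i j, r i j →
        freeGroupPi X (FreeMonoid.of (w.get i)) =
          (freeGroupPi X (FreeMonoid.of (w.get j)))⁻¹ ∧
        freeGroupPi X (FreeMonoid.ofList
          ((w.drop ((i : ℕ) + 1)).take ((j : ℕ) - (i : ℕ) - 1))) = 1) := by
  obtain ⟨r, hr, hpair⟩ := exists_isNestedMatching hw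
  exact ⟨fun i j => r i j, fun _ _ h => hr.lt h, hr.existsUnique_fin,
    fun _ _ _ _ h₁ h₂ hlt => hr.nested h₁ h₂ hlt,
    fun i j h => ⟨(hpair i j h).freeGroupPi_get_eq_inv,
      (hpair i j h).freeGroupPi_drop_take_eq_one (hr.lt h)⟩⟩
end

section
/- Let A and B be disjoint finite alphabets. If L ⊆ A* is a context-free language and L_r ⊆ B* is a regular language, then the shuffle L ⋈ L_r ⊆ (A ⊕ B)* is a context-free language. -/
/-- The shuffle of a language `L₁ ⊆ A*` with a language `L₂ ⊆ B*`, as a language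
over the disjoint union alphabet `A ⊕ B`. -/
def Language.shuffle {A B : Type} (L₁ : Language A) (L₂ : Language B) :
    Language (A ⊕ B) :=
  { w | ∃ (us : List (List A)) (vs : List (List B)),
      us.length = vs.length ∧ us.flatten ∈ L₁ ∧ vs.flatten ∈ L₂ ∧
      w = (List.zipWith (fun u v => u.map Sum.inl ++ v.map Sum.inr) us vs).flatten }

/-!
A word over `A ⊕ B` lies in `L ⋈ R` iff its `A`-letters spell a word of `L` and its `B`-letters
a word of `R`. From a grammar `g` for `L` and a DFA `M` for `R` we build a grammar with
nonterminals `lift p X q`, meant to generate the words whose `A`-part is derived from `X` and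
whose `B`-part drives `M` from `p` to `q`, and `walk p q`, generating the `B`-words that drive
`M` from `p` to `q`. A rule `X → s₁ ⋯ sₙ` of `g` becomes `lift p X q → walk p r₀ ŝ₁ ⋯ ŝₙ` for
every choice of intermediate states, where a terminal `a` between states `r` and `r'` is lifted
to `a (walk r r')` and a nonterminal `Y` to `lift r Y r'`: every block of `B`-letters has a
`walk` on its left to absorb it.

Soundness: each rule's right-hand side denotes a sublanguage of its left-hand side, and
denotations multiply along sentential forms. Completeness: induction along a derivation in `g`;
a lifted sentential form splits at the rewritten occurrence of `X`, and the lifted right-hand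
side between states `m₁` and `m₂` is folded back into `lift m₁ X m₂`.
-/

namespace List

variable {A B : Type*}

def lefts (w : List (A ⊕ B)) : List A := w.filterMap Sum.getLeft?

def rights (w : List (A ⊕ B)) : List B := w.filterMap Sum.getRight?

@[simp] theorem lefts_nil : lefts ([] : List (A ⊕ B)) = [] := rfl
@[simp] theorem rights_nil : rights ([] : List (A ⊕ B)) = [] := rfl

@[simp] theorem lefts_append (v w : List (A ⊕ B)) : lefts (v ++ w) = lefts v ++ lefts w :=
  filterMap_append
@[simp] theorem rights_append (v w : List (A ⊕ B)) : rights (v ++ w) = rights v ++ rights w :=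
  filterMap_append

@[simp] theorem lefts_map_inl (u : List A) : lefts (u.map (Sum.inl (β := B))) = u := by
  simp [lefts, filterMap_map, Function.comp_def]
@[simp] theorem lefts_map_inr (v : List B) : lefts (v.map (Sum.inr (α := A))) = [] := by
  simp [lefts, filterMap_map, Function.comp_def]
@[simp] theorem rights_map_inl (u : List A) : rights (u.map (Sum.inl (β := B))) = [] := by
  simp [rights, filterMap_map, Function.comp_def]
@[simp] theorem rights_map_inr (v : List B) : rights (v.map (Sum.inr (α := A))) = v := by
  simp [rights, filterMap_map, Function.comp_def]

theorem lefts_flatten_zipWith {us : List (List A)} {vs : List (List B)}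
    (h : us.length = vs.length) :
    (zipWith (fun u v => u.map Sum.inl ++ v.map Sum.inr) us vs).flatten.lefts = us.flatten := by
  induction us generalizing vs with
  | nil => simp
  | cons u us ih => cases vs <;> simp_all

theorem rights_flatten_zipWith {us : List (List A)} {vs : List (List B)}
    (h : us.length = vs.length) :
    (zipWith (fun u v => u.map Sum.inl ++ v.map Sum.inr) us vs).flatten.rights = vs.flatten := by
  induction vs generalizing us with
  | nil => simp
  | cons v vs ih => cases us <;> simp_all

theorem exists_flatten_zipWith_eq (w : List (A ⊕ B)) :
    ∃ (us : List (List A)) (vs : List (List B)), us.length = vs.length ∧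
      (zipWith (fun u v => u.map Sum.inl ++ v.map Sum.inr) us vs).flatten = w := by
  induction w with
  | nil => exact ⟨[], [], rfl, rfl⟩
  | cons x w ih =>
    obtain ⟨us, vs, hlen, rfl⟩ := ih
    cases x with
    | inl a => exact ⟨[a] :: us, [] :: vs, by simp [hlen], by simp⟩
    | inr b => exact ⟨[] :: us, [b] :: vs, by simp [hlen], by simp⟩

end List

theorem Language.mem_shuffle_iff {A B : Type} {L₁ : Language A} {L₂ : Language B}
    {w : List (A ⊕ B)} : w ∈ L₁.shuffle L₂ ↔ w.lefts ∈ L₁ ∧ w.rights ∈ L₂ := by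
  constructor
  · rintro ⟨us, vs, hlen, h₁, h₂, rfl⟩
    rw [List.lefts_flatten_zipWith hlen, List.rights_flatten_zipWith hlen]
    exact ⟨h₁, h₂⟩
  · rintro ⟨h₁, h₂⟩
    obtain ⟨us, vs, hlen, rfl⟩ := w.exists_flatten_zipWith_eq
    rw [List.lefts_flatten_zipWith hlen] at h₁
    rw [List.rights_flatten_zipWith hlen] at h₂
    exact ⟨us, vs, hlen, h₁, h₂, rfl⟩

namespace ContextFreeGrammar

variable {T : Type*} {g : ContextFreeGrammar T}

theorem Derives.append {u u' v v' : List (Symbol T g.NT)} (hu : g.Derives u u')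
    (hv : g.Derives v v') : g.Derives (u ++ v) (u' ++ v') :=
  (hu.append_right v).trans (hv.append_left u')

theorem Produces.prod_map_le {sem : Symbol T g.NT → Language T}
    (hsem : ∀ r ∈ g.rules, (r.output.map sem).prod ≤ sem (.nonterminal r.input))
    {u v : List (Symbol T g.NT)} (h : g.Produces u v) :
    (v.map sem).prod ≤ (u.map sem).prod := by
  obtain ⟨r, hr, hrw⟩ := h
  obtain ⟨p, q, rfl, rfl⟩ := hrw.exists_parts
  simp only [List.map_append, List.prod_append, List.map_singleton, List.prod_singleton]
  gcongr
  exact hsem r hr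

theorem Derives.prod_map_le {sem : Symbol T g.NT → Language T}
    (hsem : ∀ r ∈ g.rules, (r.output.map sem).prod ≤ sem (.nonterminal r.input))
    {u v : List (Symbol T g.NT)} (h : g.Derives u v) :
    (v.map sem).prod ≤ (u.map sem).prod := by
  induction h with
  | refl => rfl
  | tail _ hstep ih => exact (hstep.prod_map_le hsem).trans ih

theorem mem_prod_map_terminal {sem : Symbol T g.NT → Language T}
    (hterm : ∀ t, [t] ∈ sem (.terminal t)) (w : List T) :
    w ∈ ((w.map Symbol.terminal).map sem).prod := by
  induction w with
  | nil => exact (Language.mem_one _).2 rfl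
  | cons t w ih => exact Language.mem_mul.2 ⟨[t], hterm t, w, ih, rfl⟩

theorem Derives.mem_prod_map {sem : Symbol T g.NT → Language T}
    (hterm : ∀ t, [t] ∈ sem (.terminal t))
    (hsem : ∀ r ∈ g.rules, (r.output.map sem).prod ≤ sem (.nonterminal r.input))
    {u : List (Symbol T g.NT)} {w : List T} (h : g.Derives u (w.map Symbol.terminal)) :
    w ∈ (u.map sem).prod :=
  h.prod_map_le hsem (mem_prod_map_terminal hterm w)

end ContextFreeGrammar

namespace ShuffleGrammar

inductive NT (N σ : Type)
  | start
  | lift (p : σ) (X : N) (q : σ)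
  | walk (p q : σ)

variable {A B : Type*} {N σ : Type}

def liftSymbol (p : σ) : Symbol A N → σ → List (Symbol (A ⊕ B) (NT N σ))
  | .terminal a, q => [.terminal (.inl a), .nonterminal (.walk p q)]
  | .nonterminal X, q => [.nonterminal (.lift p X q)]

inductive Lifts : σ → List (Symbol A N) → σ → List (Symbol (A ⊕ B) (NT N σ)) → Prop
  | nil (p : σ) : Lifts p [] p []
  | cons {p q r : σ} (s : Symbol A N) {ss α} : Lifts q ss r α →
      Lifts p (s :: ss) r (liftSymbol p s q ++ α)

namespace Lifts

theorem append {p m q : σ} {x y : List (Symbol A N)} {α β : List (Symbol (A ⊕ B) (NT N σ))}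
    (hx : Lifts p x m α) (hy : Lifts m y q β) : Lifts p (x ++ y) q (α ++ β) := by
  induction hx with
  | nil => exact hy
  | cons s _ ih => simpa using (ih hy).cons s

theorem exists_of_append {p q : σ} {x y : List (Symbol A N)}
    {γ : List (Symbol (A ⊕ B) (NT N σ))} (h : Lifts p (x ++ y) q γ) :
    ∃ m α β, Lifts p x m α ∧ Lifts m y q β ∧ γ = α ++ β := by
  induction x generalizing p γ with
  | nil => exact ⟨p, [], γ, .nil p, h, rfl⟩
  | cons s x ih =>
    obtain _ | ⟨_, h⟩ := h
    obtain ⟨m, α, β, hx, hy, rfl⟩ := ih h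
    exact ⟨m, _, β, hx.cons s, hy, by simp⟩

theorem finite [Finite σ] (sf : List (Symbol A N)) :
    {x : σ × σ × List (Symbol (A ⊕ B) (NT N σ)) | Lifts x.1 sf x.2.1 x.2.2}.Finite := by
  induction sf with
  | nil =>
    refine (Set.finite_range fun p : σ => (p, p, ([] : List (Symbol (A ⊕ B) (NT N σ))))).subset ?_
    rintro ⟨p, q, α⟩ (_ | _)
    exact ⟨p, rfl⟩
  | cons s ss ih =>
    refine ((Set.finite_univ.prod ih).image fun x : σ × σ × σ × List _ =>
      (x.1, x.2.2.1, liftSymbol x.1 s x.2.1 ++ x.2.2.2)).subset ?_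
    rintro ⟨p, r, γ⟩ h
    change Lifts p (s :: ss) r γ at h
    obtain _ | ⟨_, h⟩ := h
    exact ⟨(p, _, r, _), ⟨trivial, h⟩, rfl⟩

end Lifts

variable (g : ContextFreeGrammar A) (M : DFA B σ)

inductive IsRule : ContextFreeRule (A ⊕ B) (NT g.NT σ) → Prop
  | expand {r : ContextFreeRule A g.NT} (hr : r ∈ g.rules) (p r₀ q : σ) {α}
      (h : Lifts r₀ r.output q α) :
      IsRule ⟨.lift p r.input q, .nonterminal (.walk p r₀) :: α⟩
  | read (p : σ) (b : B) (q : σ) :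
      IsRule ⟨.walk p q, [.terminal (.inr b), .nonterminal (.walk (M.step p b) q)]⟩
  | empty (p : σ) : IsRule ⟨.walk p p, []⟩
  | start {f : σ} (hf : f ∈ M.accept) (r₀ : σ) {α}
      (h : Lifts r₀ [.nonterminal g.initial] f α) :
      IsRule ⟨.start, .nonterminal (.walk M.start r₀) :: α⟩

theorem finite_setOf_isRule [Finite B] [Finite σ] : {r | IsRule g M r}.Finite := by
  let expansions (X : g.NT) (sf : List (Symbol A g.NT)) :=
    (fun x : σ × σ × σ × List (Symbol (A ⊕ B) (NT g.NT σ)) =>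
      (⟨.lift x.1 X x.2.2.1, .nonterminal (.walk x.1 x.2.1) :: x.2.2.2⟩ :
        ContextFreeRule (A ⊕ B) (NT g.NT σ))) ''
      (Set.univ ×ˢ {x | Lifts x.1 sf x.2.1 x.2.2})
  have hexp : ∀ X sf, (expansions X sf).Finite := fun X sf =>
    (Set.finite_univ.prod (Lifts.finite sf)).image _
  refine ((((g.rules.finite_toSet.biUnion fun r _ => hexp r.input r.output).union
    (Set.finite_range fun x : σ × B × σ =>
      (⟨.walk x.1 x.2.2,
        [.terminal (.inr x.2.1), .nonterminal (.walk (M.step x.1 x.2.1) x.2.2)]⟩ :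
          ContextFreeRule (A ⊕ B) (NT g.NT σ)))).union
    (Set.finite_range fun p : σ =>
      (⟨.walk p p, []⟩ : ContextFreeRule (A ⊕ B) (NT g.NT σ)))).union
    ((hexp g.initial [.nonterminal g.initial]).image fun r => ⟨.start, r.output⟩)).subset ?_
  rintro _ (⟨hr, p, r₀, q, h⟩ | ⟨p, b, q⟩ | ⟨p⟩ | ⟨hf, r₀, h⟩)
  · exact .inl <| .inl <| .inl <| Set.mem_biUnion hr ⟨(p, r₀, q, _), ⟨trivial, h⟩, rfl⟩
  · exact .inl <| .inl <| .inr ⟨(p, b, q), rfl⟩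
  · exact .inl <| .inr ⟨p, rfl⟩
  · exact .inr ⟨_, ⟨(M.start, r₀, _, _), ⟨trivial, h⟩, rfl⟩, rfl⟩

noncomputable def grammar [Finite B] [Finite σ] : ContextFreeGrammar (A ⊕ B) :=
  ⟨NT g.NT σ, .start, (finite_setOf_isRule g M).toFinset⟩

def liftLang (p : σ) (sf : List (Symbol A g.NT)) (q : σ) : Language (A ⊕ B) :=
  {w | g.Derives sf (w.lefts.map .terminal) ∧ M.evalFrom p w.rights = q}

section Soundness

variable {g M}

theorem liftLang_mul_le {p m q : σ} {x y : List (Symbol A g.NT)} :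
    liftLang g M p x m * liftLang g M m y q ≤ liftLang g M p (x ++ y) q := by
  rintro _ ⟨v, ⟨hv, rfl⟩, w, ⟨hw, rfl⟩, rfl⟩
  refine ⟨?_, by simp [DFA.evalFrom_of_append]⟩
  simpa using hv.append hw

theorem one_le_liftLang_nil (p : σ) : 1 ≤ liftLang g M p [] p := by
  rintro _ rfl
  exact ⟨.refl _, rfl⟩

theorem liftLang_le_of_produces {p q : σ} {sf sf' : List (Symbol A g.NT)}
    (h : g.Produces sf sf') : liftLang g M p sf' q ≤ liftLang g M p sf q :=
  fun _ hw => ⟨h.trans_derives hw.1, hw.2⟩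

variable (g M) in
def denote : Symbol (A ⊕ B) (NT g.NT σ) → Language (A ⊕ B)
  | .terminal t => {[t]}
  | .nonterminal .start =>
    {w | ∃ f ∈ M.accept, w ∈ liftLang g M M.start [.nonterminal g.initial] f}
  | .nonterminal (.lift p X q) => liftLang g M p [.nonterminal X] q
  | .nonterminal (.walk p q) => liftLang g M p [] q

theorem prod_denote_liftSymbol_le (p : σ) (s : Symbol A g.NT) (q : σ) :
    ((liftSymbol p s q).map (denote g M)).prod ≤ liftLang g M p [s] q := by
  cases s with
  | terminal a =>
    have ha : {[Sum.inl a]} ≤ liftLang g M p [.terminal a] p := by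
      rintro _ rfl
      exact ⟨.refl _, rfl⟩
    simpa [liftSymbol, denote] using (mul_le_mul_left ha _).trans liftLang_mul_le
  | nonterminal X => simp [liftSymbol, denote]

theorem Lifts.prod_denote_le {p q : σ} {sf : List (Symbol A g.NT)}
    {α : List (Symbol (A ⊕ B) (NT g.NT σ))} (h : Lifts p sf q α) :
    (α.map (denote g M)).prod ≤ liftLang g M p sf q := by
  induction h with
  | nil p => exact one_le_liftLang_nil p
  | cons s _ ih =>
    rw [List.map_append, List.prod_append]
    exact (mul_le_mul' (prod_denote_liftSymbol_le _ s _) ih).trans liftLang_mul_le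

theorem prod_denote_walk_cons_le {p r q : σ} {sf : List (Symbol A g.NT)}
    {α : List (Symbol (A ⊕ B) (NT g.NT σ))} (h : Lifts r sf q α) :
    ((.nonterminal (.walk p r) :: α).map (denote g M)).prod ≤ liftLang g M p sf q := by
  rw [List.map_cons, List.prod_cons]
  exact (mul_le_mul_right h.prod_denote_le _).trans liftLang_mul_le

theorem IsRule.prod_denote_le {r : ContextFreeRule (A ⊕ B) (NT g.NT σ)} (hr : IsRule g M r) :
    (r.output.map (denote g M)).prod ≤ denote g M (.nonterminal r.input) := by
  cases hr with
  | expand hr p r₀ q h =>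
    exact (prod_denote_walk_cons_le h).trans
      (liftLang_le_of_produces ⟨_, hr, .input_output⟩)
  | read p b q =>
    have hb : {[Sum.inr b]} ≤ liftLang g M p [] (M.step p b) := by
      rintro _ rfl
      exact ⟨.refl _, rfl⟩
    simpa [denote] using (mul_le_mul_left hb _).trans liftLang_mul_le
  | empty p => simpa [denote] using one_le_liftLang_nil p
  | start hf r₀ h => exact fun w hw => ⟨_, hf, prod_denote_walk_cons_le h hw⟩

theorem lefts_mem_and_rights_mem_of_mem_language [Finite B] [Finite σ] {w : List (A ⊕ B)}
    (hw : w ∈ (grammar g M).language) : w.lefts ∈ g.language ∧ w.rights ∈ M.accepts := by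
  obtain ⟨f, hf, hder, rfl⟩ : w ∈ denote g M (.nonterminal .start) := by
    simpa [grammar] using ContextFreeGrammar.Derives.mem_prod_map (sem := denote g M)
      (fun t => rfl)
      (fun r hr => IsRule.prod_denote_le ((finite_setOf_isRule g M).mem_toFinset.1 hr)) hw
  exact ⟨hder, hf⟩

end Soundness

section Completeness

variable {g M} [Finite B] [Finite σ]

theorem IsRule.produces_cons {X : NT g.NT σ} {out : List (Symbol (A ⊕ B) (NT g.NT σ))}
    (hr : IsRule g M ⟨X, out⟩) (u : List (Symbol (A ⊕ B) (NT g.NT σ))) :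
    (grammar g M).Produces (.nonterminal X :: u) (out ++ u) :=
  ⟨_, (finite_setOf_isRule g M).mem_toFinset.2 hr, .head u⟩

theorem IsRule.produces {X : NT g.NT σ} {out : List (Symbol (A ⊕ B) (NT g.NT σ))}
    (hr : IsRule g M ⟨X, out⟩) : (grammar g M).Produces [.nonterminal X] out :=
  ⟨_, (finite_setOf_isRule g M).mem_toFinset.2 hr, .input_output⟩

theorem derives_lift {r : ContextFreeRule A g.NT} (hr : r ∈ g.rules) {p q : σ}
    {α : List (Symbol (A ⊕ B) (NT g.NT σ))} (h : Lifts p r.output q α) :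
    (grammar g M).Derives [.nonterminal (.lift p r.input q)] α :=
  (IsRule.expand hr p p q h).produces.trans_derives ((IsRule.empty p).produces_cons α).single

theorem exists_lifts_of_terminal (w : List (A ⊕ B)) (p : σ) :
    ∃ r α, Lifts r (w.lefts.map .terminal) (M.evalFrom p w.rights) α ∧
      (grammar g M).Derives (.nonterminal (.walk p r) :: α) (w.map .terminal) := by
  induction w generalizing p with
  | nil => exact ⟨p, [], .nil p, (IsRule.empty p).produces.single⟩
  | cons x w ih =>
    cases x with
    | inl a =>
      obtain ⟨r, α, hl, hd⟩ := ih p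
      refine ⟨p, _, hl.cons (.terminal a), ?_⟩
      exact ((IsRule.empty p).produces_cons _).trans_derives (hd.append_left [.terminal (.inl a)])
    | inr b =>
      obtain ⟨r, α, hl, hd⟩ := ih (M.step p b)
      exact ⟨r, α, hl, ((IsRule.read p b r).produces_cons α).trans_derives
        (hd.append_left [.terminal (.inr b)])⟩

theorem exists_lifts_of_derives {sf : List (Symbol A g.NT)} {u : List A}
    (hd : g.Derives sf (u.map .terminal)) (w : List (A ⊕ B)) (hw : w.lefts = u) (p : σ) :
    ∃ r α, Lifts r sf (M.evalFrom p w.rights) α ∧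
      (grammar g M).Derives (.nonterminal (.walk p r) :: α) (w.map .terminal) := by
  induction hd using Relation.ReflTransGen.head_induction_on with
  | refl => exact hw ▸ exists_lifts_of_terminal w p
  | head hstep _ ih =>
    obtain ⟨r, α, hl, hder⟩ := ih
    obtain ⟨rule, hrule, hrw⟩ := hstep
    obtain ⟨x, y, rfl, rfl⟩ := hrw.exists_parts
    obtain ⟨m, αxo, αy, hxo, hy, rfl⟩ := hl.exists_of_append
    obtain ⟨m₁, αx, αo, hx, ho, rfl⟩ := hxo.exists_of_append
    refine ⟨r, αx ++ [.nonterminal (.lift m₁ rule.input m)] ++ αy,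
      (hx.append (Lifts.nil m |>.cons (.nonterminal rule.input))).append hy, ?_⟩
    refine .trans ?_ hder
    exact (((derives_lift hrule ho).append_left αx).append_right αy).append_left
      [.nonterminal (.walk p r)]

end Completeness

end ShuffleGrammar

theorem ShuffleGrammar.language_grammar {A B σ : Type} [Finite B] [Finite σ]
    (g : ContextFreeGrammar A) (M : DFA B σ) :
    (grammar g M).language = g.language.shuffle M.accepts := by
  ext w
  rw [Language.mem_shuffle_iff]
  refine ⟨lefts_mem_and_rights_mem_of_mem_language, fun ⟨hL, hR⟩ => ?_⟩
  obtain ⟨r, α, hl, hd⟩ := exists_lifts_of_derives hL w rfl M.start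
  exact (IsRule.start hR r hl).produces.trans_derives hd

theorem stmt_13_general {A B : Type} [Finite B]
    {L : Language A} {Lr : Language B}
    (h : L.IsContextFree) (hr : Lr.IsRegular) :
    (L.shuffle Lr).IsContextFree := by
  obtain ⟨g, rfl⟩ := h
  obtain ⟨σ, _, M, rfl⟩ := hr
  exact ⟨ShuffleGrammar.grammar g M, ShuffleGrammar.language_grammar g M⟩

theorem stmt_13 {A B : Type} [Finite A] [Finite B]
    {L : Language A} {Lr : Language B}
    (h : L.IsContextFree) (hr : Lr.IsRegular) :
    (L.shuffle Lr).IsContextFree :=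
  stmt_13_general h hr
end
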